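/- For every word w ∈ {0,1}ⁿ with r(w) ∈ R, the swap map Q interchanges the images of the exceptional sets of the two towers: Q(ψ(F_w)) = ψ(F̄_{w̄}) and Q(ψ(F̄_{w̄})) = ψ(F_w). -/

import Mathlib

open MeasureTheory Set Filter
open scoped Classical ENNReal

namespace RandomBeta

noncomputable section

/-- The left shift on `{0,1}^ℕ`. -/
def shift (ω : ℕ → Bool) : ℕ → Bool := fun n => ω (n + 1)

/-- The digit complementation `ω̄ᵢ = 1 - ωᵢ`. -/
def compSeq (ω : ℕ → Bool) : ℕ → Bool := fun n => !(ω n)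

/-- The interval `I_β = [0, 1/(β-1)]`. -/
def Ibeta (β : ℝ) : Set ℝ := Set.Icc 0 (1 / (β - 1))

/-- `L = [0, 1/β)`. -/
def Lset (β : ℝ) : Set ℝ := Set.Ico 0 (1 / β)

/-- `S = [1/β, 1/(β(β-1))]`. -/
def Sset (β : ℝ) : Set ℝ := Set.Icc (1 / β) (1 / (β * (β - 1)))

/-- `R = (1/(β(β-1)), 1/(β-1)]`. -/
def Rset (β : ℝ) : Set ℝ := Set.Ioc (1 / (β * (β - 1))) (1 / (β - 1))

/-- The digit produced at the point `x` when the coin shows `a`: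
`0` on `L`, `a` on `S`, `1` on `R`. -/
def digitB (β x : ℝ) (a : Bool) : Bool :=
  if x < 1 / β then false else if x ≤ 1 / (β * (β - 1)) then a else true

/-- One step of the random β-transformation on the second coordinate:
`T₀ x = βx` on `L`, `T_a x` on `S`, `T₁ x = βx - 1` on `R`. -/
def rStep (β x : ℝ) (a : Bool) : ℝ := β * x - (if digitB β x a then 1 else 0)

/-- The random β-transformation in skew-product form. -/
def Rmap (β : ℝ) (p : (ℕ → Bool) × ℝ) : (ℕ → Bool) × ℝ :=
  (shift p.1, rStep β p.2 (p.1 0))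

/-- The random β-transformation `K_β` (shifting `ω` only on `S`). -/
def Kmap (β : ℝ) (p : (ℕ → Bool) × ℝ) : (ℕ → Bool) × ℝ :=
  if p.2 < 1 / β then (p.1, β * p.2)
  else if p.2 ≤ 1 / (β * (β - 1)) then (shift p.1, β * p.2 - (if p.1 0 then 1 else 0))
  else (p.1, β * p.2 - 1)

/-- `R^n_{β,w}(x)`: the second coordinate of `R_β^n (ω, x)` for any `ω` starting with `w`. -/
def rItin (β x : ℝ) (w : List Bool) : ℝ := w.foldl (rStep β) x

/-- `r(w) = R^n_{β,w}(1)`. -/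
def rW (β : ℝ) (w : List Bool) : ℝ := rItin β 1 w

/-- The (unnormalised) density `ρ*_β`. -/
def rhoStar (β x : ℝ) : ℝ :=
  ∑' n : ℕ, ((2 * β) ^ n)⁻¹ * ∑ w : Fin n → Bool,
    ((Set.Icc (0 : ℝ) (rW β (List.ofFn w))).indicator 1 x
      + (Set.Icc (rItin β (1 / (β - 1) - 1) (List.ofFn w)) (1 / (β - 1))).indicator 1 x)

/-- `m` is the `(1/2, 1/2)` Bernoulli measure on `{0,1}^ℕ`. -/
def IsBernoulliHalf (m : Measure (ℕ → Bool)) : Prop :=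
  IsProbabilityMeasure m ∧
    ∀ (n : ℕ) (w : Fin n → Bool), m {ω | ∀ i : Fin n, ω i = w i} = (2 : ℝ≥0∞)⁻¹ ^ n

/-- The probability measure `μ_β` on `I_β` with density `ρ*_β / ∫ ρ*_β` w.r.t. Lebesgue. -/
def muBeta (β : ℝ) : Measure ℝ :=
  (volume.restrict (Ibeta β)).withDensity
    (fun x => ENNReal.ofReal (rhoStar β x / ∫ y in Ibeta β, rhoStar β y))

/-- `l(w) = Σ ωᵢ 2^(i-1)`. -/
def lVal : List Bool → ℕ
  | [] => 0
  | a :: t => (if a then 1 else 0) + 2 * lVal t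

/-- `v(w) = Σ_{k<n} β^(-k) + l(w)/(2β)^n`. -/
def vVal (β : ℝ) (w : List Bool) : ℝ :=
  (∑ k ∈ Finset.range w.length, ((β : ℝ) ^ k)⁻¹) + (lVal w : ℝ) / (2 * β) ^ w.length

/-- The sublevel `E_w = Ω × [0, r(w)] × [v(w), v(w) + (2β)^(-n))` of the tower. -/
def Eset (β : ℝ) (w : List Bool) : Set ((ℕ → Bool) × ℝ × ℝ) :=
  {p | p.2.1 ∈ Set.Icc 0 (rW β w) ∧
    p.2.2 ∈ Set.Ico (vVal β w) (vVal β w + ((2 * β) ^ w.length)⁻¹)}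

/-- The tower `E`. -/
def Etower (β : ℝ) : Set ((ℕ → Bool) × ℝ × ℝ) := ⋃ w : List Bool, Eset β w

/-- The step from `w` to `wa` is of type `T₁`. -/
def stepT1 (β : ℝ) (w : List Bool) (a : Bool) : Prop := digitB β (rW β w) a = true

/-- `C₁(wa) = v(wa) - v(w)/(2β)`. -/
def C1 (β : ℝ) (w : List Bool) (a : Bool) : ℝ := vVal β (w ++ [a]) - vVal β w / (2 * β)

/-- `C₂(wa) = 1/(2β) + Σ (2β)^(-(m+1)) - v(w)/(2β)`, summing over pairs `(u, b)` with
the step `u → ub` of type `T₁` and `v(u) < v(w)`. -/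
def C2 (β : ℝ) (w : List Bool) : ℝ :=
  (2 * β)⁻¹ +
    (∑' u : {q : List Bool × Bool // stepT1 β q.1 q.2 ∧ vVal β q.1 < vVal β w},
      ((2 * β) ^ (u.1.1.length + 1))⁻¹) - vVal β w / (2 * β)

/-- The action of `ψ` on points of the sublevel `E_w`. -/
def psiAux (β : ℝ) (w : List Bool) (p : (ℕ → Bool) × ℝ × ℝ) : (ℕ → Bool) × ℝ × ℝ :=
  if digitB β (rW β w) (p.1 0) then
    if p.2.1 < 1 / β then (shift p.1, β * p.2.1, p.2.2 / (2 * β) + C2 β w)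
    else (shift p.1, β * p.2.1 - 1, p.2.2 / (2 * β) + C1 β w (p.1 0))
  else (shift p.1, β * p.2.1, p.2.2 / (2 * β) + C1 β w (p.1 0))

/-- The tower map `ψ : E → E` (the identity off the tower). -/
def psi (β : ℝ) (p : (ℕ → Bool) × ℝ × ℝ) : (ℕ → Bool) × ℝ × ℝ :=
  if h : ∃ w : List Bool, p ∈ Eset β w then psiAux β h.choose p else p

/-- The reflection `P(ω, x, y) = (ω̄, 1/(β-1) - x, -y)`. -/
def Pmap (β : ℝ) (p : (ℕ → Bool) × ℝ × ℝ) : (ℕ → Bool) × ℝ × ℝ :=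
  (compSeq p.1, 1 / (β - 1) - p.2.1, -p.2.2)

/-- The reflected tower `Ē = P(E)`. -/
def Ebar (β : ℝ) : Set ((ℕ → Bool) × ℝ × ℝ) := Pmap β '' Etower β

/-- The exceptional set `F_w ⊆ E_w` (empty unless `r(w) ∈ R`). -/
def Fset (β : ℝ) (w : List Bool) : Set ((ℕ → Bool) × ℝ × ℝ) :=
  {p | p ∈ Eset β w ∧ p.1 0 = false ∧ p.2.1 ∈ Sset β ∧ rW β w ∈ Rset β}

/-- The swap map `Q` interchanging `ψ(F_w)` with `ψ(F̄_w̄) = P(ψ(F_w))`. -/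
def Qmap (β : ℝ) (p : (ℕ → Bool) × ℝ × ℝ) : (ℕ → Bool) × ℝ × ℝ :=
  if ∃ w : List Bool, p ∈ psi β '' Fset β w then (p.1, p.2.1 + 1, -p.2.2)
  else if ∃ w : List Bool, p ∈ Pmap β '' (psi β '' Fset β w) then (p.1, p.2.1 - 1, -p.2.2)
  else p

/-- `ψ` extended to `E ∪ Ē`, acting by `P ∘ ψ ∘ P⁻¹` on `Ē`. -/
def psiFull (β : ℝ) (p : (ℕ → Bool) × ℝ × ℝ) : (ℕ → Bool) × ℝ × ℝ :=
  if p ∈ Etower β then psi β p else Pmap β (psi β (Pmap β p))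

/-- The corrected tower map `ψ̃ = Q ∘ ψ`. -/
def psiTilde (β : ℝ) : ((ℕ → Bool) × ℝ × ℝ) → ((ℕ → Bool) × ℝ × ℝ) :=
  Qmap β ∘ psiFull β

/-- `h(ω, x, n) = #{0 ≤ i ≤ n-1 : π₂(K_β^i(ω,x)) ∈ S}`. -/
def hCount (β : ℝ) (ω : ℕ → Bool) (x : ℝ) (n : ℕ) : ℕ :=
  ((Finset.range n).filter (fun i => ((Kmap β)^[i] (ω, x)).2 ∈ Sset β)).card

/-- `π_β(a) = Σ aᵢ β^(-(i+1))`. -/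
def piB (β : ℝ) (a : ℕ → Bool) : ℝ :=
  ∑' i : ℕ, (if a i then (1 : ℝ) else 0) * ((β : ℝ) ^ (i + 1))⁻¹

/-- `𝒩ₙ(x; β)`: the number of words of length `n` extendable to a β-expansion of `x`. -/
def Ncount (β x : ℝ) (n : ℕ) : ℕ :=
  {a : Fin n → Bool | ∃ b : ℕ → Bool, (∀ i : Fin n, b i = a i) ∧ x = piB β b}.ncard

end

/-!
When `r(w) ∈ R` every step out of `E_w` has type `T₁`, and since the `y`-ranges of distinct
sublevels are disjoint, `ψ` acts on `F_w` by `(ω, x, y) ↦ (σω, βx - 1, y/(2β) + C₁(w0))`.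
So `ψ(F_w)` is the box `Ω × [0, 1/(β-1) - 1] × [v(w0), v(w0) + (2β)^(-(n+1)))`. Its
`x`-interval is carried onto `[1, 1/(β-1)]` both by `x ↦ x + 1` and by the reflection
`x ↦ 1/(β-1) - x`, so the first branch of `Q` maps `ψ(F_w)` onto `P(ψ(F_w))`. The second branch,
inverse to the first, is the one taken on `P(ψ(F_w))`: that set lies in `y < 0`, whereas every
`ψ(F_u)` lies in `y ≥ 1`.
-/

theorem image_triple_prod {α α' γ γ' δ δ' : Type*} (f : α → α') (g : γ → γ') (h : δ → δ')
    (s : Set α) (t : Set γ) (u : Set δ) :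
    (fun p : α × γ × δ => (f p.1, g p.2.1, h p.2.2)) '' (s ×ˢ t ×ˢ u) =
      (f '' s) ×ˢ (g '' t) ×ˢ (h '' u) := by
  rw [← prodMap_image_prod, ← prodMap_image_prod]
  rfl

theorem image_shift_setOf_apply_zero_eq (a : Bool) : shift '' {ω | ω 0 = a} = univ := by
  refine eq_univ_of_forall fun ω => ⟨fun n => if n = 0 then a else ω (n - 1), by simp, ?_⟩
  funext n
  simp [shift]

theorem lVal_lt_two_pow (w : List Bool) : lVal w < 2 ^ w.length := by
  induction w with
  | nil => simp [lVal]
  | cons a t ih =>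
    simp only [lVal, List.length_cons, pow_succ]
    cases a <;> simp <;> omega

theorem eq_of_lVal_eq : ∀ {u w : List Bool}, u.length = w.length → lVal u = lVal w → u = w
  | [], [], _, _ => rfl
  | a :: u, b :: w, hl, hv => by
    simp only [List.length_cons, Nat.add_right_cancel_iff] at hl
    simp only [lVal] at hv
    have hab : a = b := by cases a <;> cases b <;> simp at hv ⊢ <;> omega
    subst hab
    rw [eq_of_lVal_eq hl (by cases a <;> simp at hv <;> omega)]

theorem eq_floor_mul_of_div_le_of_lt {N t : ℝ} (hN : 0 < N) {m : ℕ} (h₁ : m / N ≤ t)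
    (h₂ : t < m / N + N⁻¹) : m = ⌊t * N⌋₊ := by
  rw [div_le_iff₀ hN] at h₁
  rw [← one_div, ← add_div, lt_div_iff₀ hN] at h₂
  exact ((Nat.floor_eq_iff ((Nat.cast_nonneg m).trans h₁)).2 ⟨h₁, h₂⟩).symm

section Tower

variable {β : ℝ}

theorem sum_range_inv_pow_mono (hβ : 0 < β) : Monotone fun n => ∑ k ∈ Finset.range n, (β ^ k)⁻¹ :=
  fun _ _ hmn => Finset.sum_le_sum_of_subset_of_nonneg (Finset.range_subset_range.2 hmn)
    fun _ _ _ => by positivity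

theorem sum_range_inv_pow_le_vVal (hβ : 0 < β) (w : List Bool) :
    ∑ k ∈ Finset.range w.length, (β ^ k)⁻¹ ≤ vVal β w :=
  le_add_of_nonneg_right (by positivity)

theorem vVal_add_le_sum_range_succ (hβ : 0 < β) (w : List Bool) :
    vVal β w + ((2 * β) ^ w.length)⁻¹ ≤ ∑ k ∈ Finset.range (w.length + 1), (β ^ k)⁻¹ := by
  have hl : (lVal w : ℝ) + 1 ≤ 2 ^ w.length := by exact_mod_cast lVal_lt_two_pow w
  have key : (lVal w : ℝ) / (2 * β) ^ w.length + ((2 * β) ^ w.length)⁻¹ ≤ (β ^ w.length)⁻¹ := by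
    rwa [← one_div, ← add_div, mul_pow, div_le_iff₀ (by positivity), mul_comm (2 ^ _),
      inv_mul_cancel_left₀ (by positivity)]
  rw [Finset.sum_range_succ, vVal]
  linarith

theorem one_le_vVal (hβ : 0 < β) {w : List Bool} (hw : w ≠ []) : 1 ≤ vVal β w := by
  have h : (β ^ 0)⁻¹ ≤ ∑ k ∈ Finset.range w.length, (β ^ k)⁻¹ :=
    Finset.single_le_sum (f := fun k => (β ^ k)⁻¹) (fun _ _ => by positivity)
      (by simpa [List.length_pos_iff] using hw)
  rw [pow_zero, inv_one] at h
  exact h.trans (sum_range_inv_pow_le_vVal hβ w)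

theorem length_le_of_mem_vVal_Ico (hβ : 0 < β) {u w : List Bool} {y : ℝ}
    (hu : y ∈ Ico (vVal β u) (vVal β u + ((2 * β) ^ u.length)⁻¹))
    (hw : y ∈ Ico (vVal β w) (vVal β w + ((2 * β) ^ w.length)⁻¹)) : u.length ≤ w.length := by
  by_contra! h
  have := sum_range_inv_pow_mono hβ (Nat.succ_le_of_lt h)
  linarith [sum_range_inv_pow_le_vVal hβ u, vVal_add_le_sum_range_succ hβ w, hu.1, hw.2]

theorem eq_of_mem_vVal_Ico (hβ : 0 < β) {u w : List Bool} {y : ℝ}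
    (hu : y ∈ Ico (vVal β u) (vVal β u + ((2 * β) ^ u.length)⁻¹))
    (hw : y ∈ Ico (vVal β w) (vVal β w + ((2 * β) ^ w.length)⁻¹)) : u = w := by
  have hlen := (length_le_of_mem_vVal_Ico hβ hu hw).antisymm (length_le_of_mem_vVal_Ico hβ hw hu)
  set S := ∑ k ∈ Finset.range w.length, (β ^ k)⁻¹
  have hN : 0 < (2 * β) ^ w.length := by positivity
  have hfloor : ∀ v : List Bool, v.length = w.length →
      y ∈ Ico (vVal β v) (vVal β v + ((2 * β) ^ v.length)⁻¹) →
      lVal v = ⌊(y - S) * (2 * β) ^ w.length⌋₊ := by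
    rintro v hv ⟨h₁, h₂⟩
    simp only [vVal, hv] at h₁ h₂
    exact eq_floor_mul_of_div_le_of_lt hN (by linarith) (by linarith)
  exact eq_of_lVal_eq hlen ((hfloor u hlen hu).trans (hfloor w rfl hw).symm)

theorem eq_of_mem_Eset (hβ : 0 < β) {p : (ℕ → Bool) × ℝ × ℝ} {u w : List Bool}
    (hu : p ∈ Eset β u) (hw : p ∈ Eset β w) : u = w :=
  eq_of_mem_vVal_Ico hβ hu.2 hw.2

theorem digitB_eq_true_of_mem_Rset (hβ₁ : 1 < β) (hβ₂ : β ≤ 2) {x : ℝ} (hx : x ∈ Rset β)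
    (a : Bool) : digitB β x a = true := by
  have hLS : 1 / β ≤ 1 / (β * (β - 1)) :=
    one_div_le_one_div_of_le (by nlinarith) (by nlinarith)
  rw [digitB, if_neg (not_lt.2 (hLS.trans hx.1.le)), if_neg (not_le.2 hx.1)]

theorem psi_eq_of_mem_Fset (hβ₁ : 1 < β) (hβ₂ : β ≤ 2) {w : List Bool}
    {q : (ℕ → Bool) × ℝ × ℝ} (hq : q ∈ Fset β w) :
    psi β q = (shift q.1, β * q.2.1 - 1, q.2.2 / (2 * β) + C1 β w false) := by
  obtain ⟨hqE, hq0, hqS, hwR⟩ := hq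
  have h : ∃ u, q ∈ Eset β u := ⟨w, hqE⟩
  rw [psi, dif_pos h, eq_of_mem_Eset (by linarith) h.choose_spec hqE, psiAux,
    if_pos (digitB_eq_true_of_mem_Rset hβ₁ hβ₂ hwR _), if_neg (not_lt.2 hqS.1), hq0]

theorem Fset_eq_prod (hβ : 1 < β) {w : List Bool} (hw : rW β w ∈ Rset β) :
    Fset β w = {ω | ω 0 = false} ×ˢ Sset β ×ˢ
      Ico (vVal β w) (vVal β w + ((2 * β) ^ w.length)⁻¹) := by
  have hS : Sset β ⊆ Icc 0 (rW β w) :=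
    Icc_subset_Icc (by positivity) hw.1.le
  ext p
  simp only [Fset, Eset, mem_ofPred_eq, mem_prod, hw, and_true]
  constructor
  · rintro ⟨⟨-, hy⟩, h0, hx⟩
    exact ⟨h0, hx, hy⟩
  · rintro ⟨h0, hx, hy⟩
    exact ⟨⟨hS hx, hy⟩, h0, hx⟩

theorem psi_image_Fset (hβ₁ : 1 < β) (hβ₂ : β ≤ 2) {w : List Bool} (hw : rW β w ∈ Rset β) :
    psi β '' Fset β w = univ ×ˢ Icc 0 (1 / (β - 1) - 1) ×ˢ
      Ico (vVal β (w ++ [false]))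
        (vVal β (w ++ [false]) + ((2 * β) ^ (w ++ [false]).length)⁻¹) := by
  have hβ₀ : 0 < β := by linarith
  have hx : (fun x => β * x - 1) '' Sset β = Icc 0 (1 / (β - 1) - 1) := by
    rw [image_congr' fun x => sub_eq_add_neg (β * x) 1, Sset, image_affine_Icc' hβ₀]
    have : β - 1 ≠ 0 := by linarith
    congr 1 <;> field_simp <;> ring
  have hy : (fun y => y / (2 * β) + C1 β w false) ''
      Ico (vVal β w) (vVal β w + ((2 * β) ^ w.length)⁻¹) =
      Ico (vVal β (w ++ [false]))
        (vVal β (w ++ [false]) + ((2 * β) ^ (w ++ [false]).length)⁻¹) := by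
    have haff : (fun y => y / (2 * β) + C1 β w false) = ((2 * β)⁻¹ * · + C1 β w false) := by
      funext y
      ring
    rw [haff, image_affine_Ico (by positivity), C1, List.length_append, List.length_singleton,
      pow_succ, mul_inv]
    congr 1 <;> ring
  rw [image_congr fun q hq => psi_eq_of_mem_Fset hβ₁ hβ₂ hq, Fset_eq_prod hβ₁ hw,
    image_triple_prod shift (fun x => β * x - 1) (fun y => y / (2 * β) + C1 β w false),
    image_shift_setOf_apply_zero_eq, hx, hy]

theorem pos_of_mem_psi_image_Fset (hβ₁ : 1 < β) (hβ₂ : β ≤ 2) {w : List Bool}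
    {p : (ℕ → Bool) × ℝ × ℝ} (hp : p ∈ psi β '' Fset β w) : 0 < p.2.2 := by
  have hw : rW β w ∈ Rset β := by
    obtain ⟨q, hq, -⟩ := hp
    exact hq.2.2.2
  rw [psi_image_Fset hβ₁ hβ₂ hw] at hp
  exact one_pos.trans_le ((one_le_vVal (by linarith) (by simp)).trans hp.2.2.1)

theorem Qmap_of_mem_psi_image_Fset {w : List Bool} {p : (ℕ → Bool) × ℝ × ℝ}
    (hp : p ∈ psi β '' Fset β w) : Qmap β p = (p.1, p.2.1 + 1, -p.2.2) := by
  rw [Qmap, if_pos ⟨w, hp⟩]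

theorem Qmap_of_mem_Pmap_psi_image_Fset (hβ₁ : 1 < β) (hβ₂ : β ≤ 2) {w : List Bool}
    {p : (ℕ → Bool) × ℝ × ℝ} (hp : p ∈ Pmap β '' (psi β '' Fset β w)) :
    Qmap β p = (p.1, p.2.1 - 1, -p.2.2) := by
  have hneg : p.2.2 < 0 := by
    obtain ⟨q, hq, rfl⟩ := hp
    exact neg_neg_of_pos (pos_of_mem_psi_image_Fset hβ₁ hβ₂ hq)
  have hnot : ¬∃ u : List Bool, p ∈ psi β '' Fset β u := fun ⟨_, hu⟩ =>
    (pos_of_mem_psi_image_Fset hβ₁ hβ₂ hu).not_gt hneg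
  rw [Qmap, if_neg hnot, if_pos ⟨w, hp⟩]

theorem Pmap_image_prod (s : Set (ℕ → Bool)) (t u : Set ℝ) :
    Pmap β '' (s ×ˢ t ×ˢ u) = (compSeq '' s) ×ˢ ((1 / (β - 1) - ·) '' t) ×ˢ (Neg.neg '' u) :=
  image_triple_prod _ _ _ s t u

theorem compSeq_involutive : Function.Involutive compSeq := fun ω => by
  funext n
  simp [compSeq]

end Tower

/-- for `r(w) ∈ R`, the swap map `Q` interchanges the images of the exceptional
sets of the two towers: `Q(ψ(F_w)) = ψ(F̄_w̄)` and `Q(ψ(F̄_w̄)) = ψ(F_w)`, where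
`ψ(F̄_w̄) = P(ψ(F_w))` since `ψ = P ∘ ψ ∘ P⁻¹` on `Ē`. -/
theorem stmt12 (β : ℝ) (hβ : 1 < β ∧ β < 2) (w : List Bool) (hw : rW β w ∈ Rset β) :
    Qmap β '' (psi β '' Fset β w) = Pmap β '' (psi β '' Fset β w) ∧
    Qmap β '' (Pmap β '' (psi β '' Fset β w)) = psi β '' Fset β w := by
  obtain ⟨hβ₁, hβ₂⟩ := hβ
  rw [image_congr fun p hp => Qmap_of_mem_Pmap_psi_image_Fset hβ₁ hβ₂.le hp,
    image_congr fun p hp => Qmap_of_mem_psi_image_Fset hp, psi_image_Fset hβ₁ hβ₂.le hw,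
    Pmap_image_prod, image_univ_of_surjective compSeq_involutive.surjective,
    image_triple_prod (fun ω => ω) (· + 1) Neg.neg, image_triple_prod (fun ω => ω) (· - 1) Neg.neg]
  simp

end RandomBeta
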